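/- Let Ω = [−3,3] ⊂ ℝ. For a ≥ 0 define R_a : [−3,3] → [−3,3] by R_a(x) = x for |x| ≥ 1 and R_a(x) = x + (1/10)·cos²(πx/2)·cos(ax) for |x| < 1. For a probability measure μ on Ω set κ(μ) := ∫_{[−2,−1]} (2−|x|) dμ(x) + μ([−1,1]) + ∫_{[1,2]} (2−x) dμ(x), a(μ) := 1/κ(μ) if κ(μ) > 0 and a(μ) := 0 otherwise, and f(μ) := (R_{a(μ)})_# μ. Then f maps P([−3,3]) to P([−3,3]), f is a support-preserving map, and f is continuous in the 1-Wasserstein topology. -/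

import Mathlib

open MeasureTheory Filter Set
open scoped ENNReal

/-- The 1-Wasserstein distance, via Kantorovich–Rubinstein duality. -/
noncomputable def W1 {E : Type*} [MeasurableSpace E] [PseudoMetricSpace E]
    (μ ν : Measure E) : ℝ :=
  ⨆ φ : {φ : E → ℝ // LipschitzWith 1 φ}, ((∫ x, φ.1 x ∂μ) - ∫ x, φ.1 x ∂ν)

/-- `P(Ω)`: the Borel probability measures supported in `Ω`. -/
def ProbOn {E : Type*} [MeasurableSpace E] (Ω : Set E) : Set (Measure E) :=
  {μ | IsProbabilityMeasure μ ∧ μ Ωᶜ = 0}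

/-- A map `f : P(Ω) → P(Ω)` is support-preserving. -/
def SupportPreservingProb {E : Type*} [MeasurableSpace E]
    (Ω : Set E) (f : Measure E → Measure E) : Prop :=
  ∀ n : ℕ, 0 < n → ∀ x : Fin n → E, (∀ i, x i ∈ Ω) →
    ∃ y : Fin n → E, (∀ i, y i ∈ Ω) ∧
      f (∑ i, ((n : ℝ≥0∞))⁻¹ • Measure.dirac (x i))
        = ∑ i, ((n : ℝ≥0∞))⁻¹ • Measure.dirac (y i) ∧
      ∀ i j, x i = x j → y i = y j

/-- `R_a(x) = x + (1/10)·cos²(πx/2)·cos(ax)` for `|x| < 1`, and `R_a(x) = x` otherwise. -/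
noncomputable def Rmap (a x : ℝ) : ℝ :=
  if |x| < 1 then x + (1 / 10) * Real.cos (Real.pi * x / 2) ^ 2 * Real.cos (a * x) else x

/-- `κ(μ) = ∫_{[-2,-1)} (2-|x|) dμ + μ([-1,1]) + ∫_{(1,2]} (2-x) dμ`. -/
noncomputable def kappa (μ : Measure ℝ) : ℝ :=
  (∫ x in Set.Ico (-2 : ℝ) (-1), (2 - |x|) ∂μ)
    + (μ (Set.Icc (-1 : ℝ) 1)).toReal
    + ∫ x in Set.Ioc (1 : ℝ) 2, (2 - x) ∂μ

/-- `a(μ) = 1/κ(μ)` if `κ(μ) > 0`, and `a(μ) = 0` otherwise. -/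
noncomputable def amu (μ : Measure ℝ) : ℝ :=
  if 0 < kappa μ then (kappa μ)⁻¹ else 0

/-- The counterexample map `f(μ) = (R_{a(μ)})_♯ μ`. -/
noncomputable def fCounter (μ : Measure ℝ) : Measure ℝ :=
  Measure.map (Rmap (amu μ)) μ

/-!
`f(μ)` is the push-forward of `μ` by `R_{a(μ)}`, which is `(2 + |a|)`-Lipschitz and moves only the
points of `[-1, 1]`, and `R_a`, `R_b` differ there by at most `min (1/5) (|a - b|/10)`. Testing
against 1-Lipschitz functions gives
`W1(fμ, fν) ≤ (2 + |a(μ)|) W1(μ, ν) + min (1/5) (|a(μ) - a(ν)|/10) · ν[-1, 1]`.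
Now `κ` is the integral of a 1-Lipschitz trapezoid, so `|κ(μ) - κ(ν)| ≤ W1(μ, ν)`, and
`ν[-1, 1] ≤ κ(ν)`. If `κ(μ) > 0`, then `|a(μ) - a(ν)| κ(ν) = |κ(μ) - κ(ν)| / κ(μ)` for `ν` close
to `μ`; if `κ(μ) = 0`, then `ν[-1, 1]/5 ≤ κ(ν)/5 ≤ W1(μ, ν)/5`. Either way `f` is Lipschitz
at `μ`.
-/

open Real Metric Bornology
open scoped NNReal

lemma LipschitzWith.mul_of_abs_le_one {α : Type*} [PseudoMetricSpace α] {f g : α → ℝ}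
    {Kf Kg : ℝ≥0} (hf : LipschitzWith Kf f) (hg : LipschitzWith Kg g)
    (hf₁ : ∀ x, |f x| ≤ 1) (hg₁ : ∀ x, |g x| ≤ 1) :
    LipschitzWith (Kf + Kg) fun x ↦ f x * g x := by
  refine LipschitzWith.of_dist_le_mul fun x y ↦ ?_
  have hfxy := hf.dist_le_mul x y
  have hgxy := hg.dist_le_mul x y
  rw [Real.dist_eq] at hfxy hgxy ⊢
  calc |f x * g x - f y * g y| = |(f x - f y) * g x + f y * (g x - g y)| := by ring_nf
    _ ≤ |f x - f y| * 1 + 1 * |g x - g y| := by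
      refine (abs_add_le _ _).trans (add_le_add ?_ ?_) <;> rw [abs_mul]
      · exact mul_le_mul_of_nonneg_left (hg₁ x) (abs_nonneg _)
      · exact mul_le_mul_of_nonneg_right (hf₁ y) (abs_nonneg _)
    _ ≤ (Kf + Kg : ℝ≥0) * dist x y := by push_cast; linarith

lemma abs_cos_sq_sub_cos_sq_le (p q : ℝ) : |cos p ^ 2 - cos q ^ 2| ≤ 2 * |p - q| := by
  rw [sq_sub_sq, abs_mul]
  refine mul_le_mul ?_ (abs_cos_sub_cos_le p q) (abs_nonneg _) zero_le_two
  linarith [abs_add_le (cos p) (cos q), abs_cos_le_one p, abs_cos_le_one q]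

/-- Clamping the argument to `[-1, 1]` changes nothing on `(-1, 1)` and makes the bump vanish
outside, since `cos (±π/2) = 0`. -/
noncomputable def rmapBump (x : ℝ) : ℝ := cos (π * max (-1) (min 1 x) / 2) ^ 2 / 10

lemma rmapBump_of_lt {x : ℝ} (hx : |x| < 1) : rmapBump x = cos (π * x / 2) ^ 2 / 10 := by
  obtain ⟨h₁, h₂⟩ := abs_lt.mp hx
  rw [rmapBump, min_eq_right h₂.le, max_eq_right h₁.le]

lemma rmapBump_of_not_lt {x : ℝ} (hx : ¬ |x| < 1) : rmapBump x = 0 := by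
  rcases le_or_gt 1 x with h | h
  · rw [rmapBump, min_eq_left h, max_eq_right (by norm_num), mul_one, cos_pi_div_two]; norm_num
  · have : x ≤ -1 := by rcases abs_cases x with ⟨h', _⟩ | ⟨h', _⟩ <;> linarith
    rw [rmapBump, min_eq_right h.le, max_eq_left this, mul_neg_one, neg_div, cos_neg,
      cos_pi_div_two]
    norm_num

lemma Rmap_eq_add_rmapBump_mul (a x : ℝ) : Rmap a x = x + rmapBump x * cos (a * x) := by
  by_cases hx : |x| < 1
  · rw [Rmap, if_pos hx, rmapBump_of_lt hx]; ring
  · rw [Rmap, if_neg hx, rmapBump_of_not_lt hx]; ring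

lemma rmapBump_nonneg (x : ℝ) : 0 ≤ rmapBump x := by unfold rmapBump; positivity

lemma rmapBump_le (x : ℝ) : rmapBump x ≤ 1 / 10 := by
  unfold rmapBump; linarith [cos_sq_le_one (π * max (-1) (min 1 x) / 2)]

lemma lipschitzWith_rmapBump : LipschitzWith 1 rmapBump := by
  have hclamp : LipschitzWith 1 fun x : ℝ ↦ max (-1) (min 1 x) :=
    (LipschitzWith.id.const_min 1).const_max (-1)
  refine LipschitzWith.of_dist_le_mul fun x y ↦ ?_
  have hxy := hclamp.dist_le_mul x y
  rw [Real.dist_eq, Real.dist_eq] at hxy ⊢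
  calc |rmapBump x - rmapBump y|
      = |cos (π * max (-1) (min 1 x) / 2) ^ 2 - cos (π * max (-1) (min 1 y) / 2) ^ 2| / 10 := by
        rw [rmapBump, rmapBump, ← sub_div, abs_div, abs_of_pos (by norm_num : (0 : ℝ) < 10)]
    _ ≤ 2 * |π * max (-1) (min 1 x) / 2 - π * max (-1) (min 1 y) / 2| / 10 := by
        gcongr; exact abs_cos_sq_sub_cos_sq_le _ _
    _ = π / 10 * |max (-1) (min 1 x) - max (-1) (min 1 y)| := by
        rw [← sub_div, ← mul_sub, abs_div, abs_mul, abs_of_pos pi_pos, abs_two]; ring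
    _ ≤ 1 * |x - y| := by
        push_cast at hxy
        nlinarith [pi_lt_four, abs_nonneg (max (-1) (min 1 x) - max (-1) (min 1 y))]

lemma lipschitzWith_Rmap (a : ℝ) : LipschitzWith (2 + ‖a‖₊) (Rmap a) := by
  have hcos : LipschitzWith ‖a‖₊ fun x : ℝ ↦ cos (a * x) :=
    lipschitzWith_cos.comp (lipschitzWith_smul a) |>.weaken (by simp)
  have hprod := lipschitzWith_rmapBump.mul_of_abs_le_one hcos
    (fun x ↦ by rw [abs_of_nonneg (rmapBump_nonneg x)]; linarith [rmapBump_le x])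
    (fun x ↦ abs_cos_le_one _)
  rw [funext (Rmap_eq_add_rmapBump_mul a), show (2 : ℝ≥0) + ‖a‖₊ = 1 + (1 + ‖a‖₊) by ring]
  exact LipschitzWith.id.add hprod

lemma continuous_Rmap (a : ℝ) : Continuous (Rmap a) := (lipschitzWith_Rmap a).continuous

lemma abs_Rmap_sub_self_le (a x : ℝ) : |Rmap a x - x| ≤ 1 / 10 := by
  rw [Rmap_eq_add_rmapBump_mul, add_sub_cancel_left, abs_mul, abs_of_nonneg (rmapBump_nonneg x)]
  nlinarith [rmapBump_le x, rmapBump_nonneg x, abs_cos_le_one (a * x), abs_nonneg (cos (a * x))]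

lemma Rmap_mapsTo_Icc (a : ℝ) {r : ℝ} (hr : 11 / 10 ≤ r) :
    MapsTo (Rmap a) (Icc (-r) r) (Icc (-r) r) := by
  intro x hx
  by_cases h : |x| < 1
  · have := abs_le.mp (abs_Rmap_sub_self_le a x)
    have := abs_lt.mp h
    constructor <;> linarith
  · rwa [Rmap, if_neg h]

lemma abs_Rmap_sub_Rmap_le (a b x : ℝ) :
    |Rmap a x - Rmap b x| ≤ (Icc (-1) 1).indicator (fun _ ↦ min (1 / 5) (|a - b| / 10)) x := by
  by_cases h : |x| < 1
  · rw [indicator_of_mem (show x ∈ Icc (-1) 1 from abs_le.mp h.le), Rmap_eq_add_rmapBump_mul,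
      Rmap_eq_add_rmapBump_mul, add_sub_add_left_eq_sub, ← mul_sub, abs_mul,
      abs_of_nonneg (rmapBump_nonneg x)]
    have hcos : |cos (a * x) - cos (b * x)| ≤ min 2 |a - b| := by
      refine le_min ?_ ?_
      · linarith [abs_sub (cos (a * x)) (cos (b * x)), abs_cos_le_one (a * x),
          abs_cos_le_one (b * x)]
      · calc |cos (a * x) - cos (b * x)| ≤ |a * x - b * x| := abs_cos_sub_cos_le _ _
          _ = |a - b| * |x| := by rw [← sub_mul, abs_mul]
          _ ≤ |a - b| := mul_le_of_le_one_right (abs_nonneg _) h.le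
    calc rmapBump x * |cos (a * x) - cos (b * x)| ≤ 1 / 10 * min 2 |a - b| :=
          mul_le_mul (rmapBump_le x) hcos (abs_nonneg _) (by norm_num)
      _ = min (1 / 5) (|a - b| / 10) := by
          rw [mul_min_of_nonneg _ _ (by norm_num)]; congr 1 <;> ring
  · rw [Rmap, Rmap, if_neg h, if_neg h, sub_self, abs_zero]
    exact indicator_nonneg (fun _ _ ↦ by positivity) x

lemma nonempty_of_mem_probOn {E : Type*} [MeasurableSpace E] {s : Set E} {μ : Measure E}
    (hμ : μ ∈ ProbOn s) : s.Nonempty := by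
  have := hμ.1
  refine nonempty_iff_ne_empty.mpr fun hs ↦ ?_
  simpa [hs] using hμ.2

lemma ae_mem_of_mem_probOn {E : Type*} [MeasurableSpace E] {s : Set E} {μ : Measure E}
    (hμ : μ ∈ ProbOn s) : ∀ᵐ x ∂μ, x ∈ s :=
  mem_ae_iff.mpr hμ.2

lemma W1_le_of_forall {E : Type*} [MeasurableSpace E] [PseudoMetricSpace E] {μ ν : Measure E}
    {c : ℝ} (h : ∀ φ : E → ℝ, LipschitzWith 1 φ → (∫ x, φ x ∂μ) - ∫ x, φ x ∂ν ≤ c) :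
    W1 μ ν ≤ c :=
  have : Nonempty {φ : E → ℝ // LipschitzWith 1 φ} := ⟨⟨fun _ ↦ 0, LipschitzWith.const' 0⟩⟩
  ciSup_le fun φ ↦ h φ.1 φ.2

section BoundedSupport

variable {E : Type*} [PseudoMetricSpace E] [MeasurableSpace E] [OpensMeasurableSpace E]
  {s : Set E} {μ ν : Measure E}

lemma LipschitzWith.integrable_of_mem_probOn (hs : IsBounded s) (hμ : μ ∈ ProbOn s)
    {K : ℝ≥0} {φ : E → ℝ} (hφ : LipschitzWith K φ) : Integrable φ μ := by
  have := hμ.1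
  obtain ⟨C, hC⟩ := (hφ.isBounded_image hs).exists_norm_le
  exact Integrable.of_bound hφ.continuous.aestronglyMeasurable C
    ((ae_mem_of_mem_probOn hμ).mono fun x hx ↦ hC _ (mem_image_of_mem φ hx))

lemma integral_le_add_diam (hs : IsBounded s) (hμ : μ ∈ ProbOn s) {φ : E → ℝ}
    (hφ : LipschitzWith 1 φ) {x₀ : E} (hx₀ : x₀ ∈ s) : ∫ x, φ x ∂μ ≤ φ x₀ + diam s := by
  have := hμ.1
  have hbound : ∀ᵐ x ∂μ, φ x ≤ φ x₀ + diam s :=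
    (ae_mem_of_mem_probOn hμ).mono fun x hx ↦ by
      have := (le_abs_self _).trans (hφ.dist_le_mul x x₀)
      rw [NNReal.coe_one, one_mul] at this
      linarith [dist_le_diam_of_mem hs hx hx₀]
  simpa using integral_mono_ae (hφ.integrable_of_mem_probOn hs hμ) (integrable_const _) hbound

lemma integral_sub_integral_le_W1 (hs : IsBounded s) (hμ : μ ∈ ProbOn s) (hν : ν ∈ ProbOn s)
    {φ : E → ℝ} (hφ : LipschitzWith 1 φ) : (∫ x, φ x ∂μ) - ∫ x, φ x ∂ν ≤ W1 μ ν := by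
  obtain ⟨x₀, hx₀⟩ := nonempty_of_mem_probOn hμ
  -- without a bound the supremum defining `W1` would be the junk value `0`
  refine le_ciSup (f := fun ψ : {ψ : E → ℝ // LipschitzWith 1 ψ} ↦ (∫ x, ψ.1 x ∂μ) - ∫ x, ψ.1 x ∂ν)
    ⟨2 * diam s, ?_⟩ ⟨φ, hφ⟩
  rintro _ ⟨ψ, rfl⟩
  have hμψ := integral_le_add_diam hs hμ ψ.2 hx₀
  have hνψ := integral_le_add_diam hs hν ψ.2.neg hx₀
  simp only [Pi.neg_apply, integral_neg] at hνψ
  dsimp only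
  linarith

lemma integral_sub_integral_le_mul_W1 (hs : IsBounded s) (hμ : μ ∈ ProbOn s)
    (hν : ν ∈ ProbOn s) {K : ℝ≥0} {φ : E → ℝ} (hφ : LipschitzWith K φ) :
    (∫ x, φ x ∂μ) - ∫ x, φ x ∂ν ≤ K * W1 μ ν := by
  rcases eq_or_ne K 0 with rfl | hK
  · obtain ⟨x₀, -⟩ := nonempty_of_mem_probOn hμ
    have := hμ.1
    have := hν.1
    have hconst : φ = fun _ ↦ φ x₀ := funext fun x ↦ by simpa using hφ.dist_le_mul x x₀
    rw [hconst]
    simp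
  · have hφK : LipschitzWith 1 fun x ↦ (K : ℝ)⁻¹ * φ x := by
      have := (lipschitzWith_smul ((K : ℝ)⁻¹)).comp hφ
      rwa [nnnorm_inv, NNReal.nnnorm_eq, inv_mul_cancel₀ hK] at this
    have := integral_sub_integral_le_W1 hs hμ hν hφK
    rwa [integral_const_mul, integral_const_mul, ← mul_sub,
      inv_mul_le_iff₀ (NNReal.coe_pos.mpr (pos_iff_ne_zero.mpr hK))] at this

lemma W1_map_map_le {F : Type*} [PseudoMetricSpace F] [MeasurableSpace F] [BorelSpace F]
    (hs : IsBounded s) (hμ : μ ∈ ProbOn s) (hν : ν ∈ ProbOn s) {T T' : E → F}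
    {K K' : ℝ≥0} (hT : LipschitzWith K T) (hT' : LipschitzWith K' T') :
    W1 (μ.map T) (ν.map T') ≤ K * W1 μ ν + ∫ x, dist (T x) (T' x) ∂ν := by
  refine W1_le_of_forall fun φ hφ ↦ ?_
  rw [integral_map hT.continuous.aemeasurable hφ.continuous.aestronglyMeasurable,
    integral_map hT'.continuous.aemeasurable hφ.continuous.aestronglyMeasurable]
  have hφT : LipschitzWith K fun x ↦ φ (T x) := by simpa [Function.comp_def] using hφ.comp hT
  have hφT' : LipschitzWith K' fun x ↦ φ (T' x) := by simpa [Function.comp_def] using hφ.comp hT'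
  have hint := hφT.integrable_of_mem_probOn hs hν
  have hint' := hφT'.integrable_of_mem_probOn hs hν
  have hdist : ∫ x, (φ (T x) - φ (T' x)) ∂ν ≤ ∫ x, dist (T x) (T' x) ∂ν := by
    refine integral_mono (hint.sub hint')
      ((LipschitzWith.dist.comp (hT.prodMk hT')).integrable_of_mem_probOn hs hν) fun x ↦ ?_
    have := (le_abs_self _).trans (hφ.dist_le_mul (T x) (T' x))
    rwa [NNReal.coe_one, one_mul] at this
  rw [integral_sub hint hint'] at hdist
  linarith [integral_sub_integral_le_mul_W1 hs hμ hν hφT]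

end BoundedSupport

noncomputable def kappaWeight (x : ℝ) : ℝ := max 0 (min 1 (2 - |x|))

lemma lipschitzWith_kappaWeight : LipschitzWith 1 kappaWeight := by
  have h : LipschitzWith 1 fun x : ℝ ↦ 2 - |x| := by
    simpa only [zero_add, Real.norm_eq_abs] using
      (LipschitzWith.const (2 : ℝ)).sub (lipschitzWith_one_norm (E := ℝ))
  exact (h.const_min 1).const_max 0

lemma kappaWeight_eq_indicator :
    kappaWeight = (Ico (-2) (-1)).indicator (fun x ↦ 2 - |x|) + (Icc (-1) 1).indicator 1
      + (Ioc 1 2).indicator (fun x ↦ 2 - x) := by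
  ext x
  simp only [kappaWeight, Pi.add_apply, indicator_apply, mem_Ico, mem_Icc, mem_Ioc, Pi.one_apply]
  grind

lemma kappa_eq_integral_kappaWeight (μ : Measure ℝ) [IsFiniteMeasure μ] :
    kappa μ = ∫ x, kappaWeight x ∂μ := by
  have hleft : Integrable ((Ico (-2 : ℝ) (-1)).indicator fun x ↦ 2 - |x|) μ :=
    ((continuous_const.sub continuous_abs).integrableOn_Icc.mono_set Ico_subset_Icc_self)
      |>.integrable_indicator measurableSet_Ico
  have hright : Integrable ((Ioc (1 : ℝ) 2).indicator fun x ↦ 2 - x) μ :=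
    ((continuous_const.sub continuous_id).integrableOn_Icc.mono_set Ioc_subset_Icc_self)
      |>.integrable_indicator measurableSet_Ioc
  have hmid : Integrable ((Icc (-1 : ℝ) 1).indicator 1) μ :=
    (integrable_const (1 : ℝ)).indicator measurableSet_Icc
  rw [kappaWeight_eq_indicator, integral_add' (hleft.add hmid) hright,
    integral_add' hleft hmid, integral_indicator measurableSet_Ico,
    integral_indicator measurableSet_Ioc, integral_indicator_one measurableSet_Icc, kappa,
    measureReal_def]

lemma measure_Icc_le_kappa (μ : Measure ℝ) [IsFiniteMeasure μ] :
    (μ (Icc (-1) 1)).toReal ≤ kappa μ := by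
  have hleft : 0 ≤ ∫ x in Ico (-2 : ℝ) (-1), (2 - |x|) ∂μ :=
    setIntegral_nonneg measurableSet_Ico fun x hx ↦ by
      rw [abs_of_neg (by linarith [hx.2])]; linarith [hx.1]
  have hright : 0 ≤ ∫ x in Ioc (1 : ℝ) 2, (2 - x) ∂μ :=
    setIntegral_nonneg measurableSet_Ioc fun x hx ↦ by linarith [hx.2]
  rw [kappa]
  linarith

lemma abs_kappa_sub_kappa_le_W1 {s : Set ℝ} (hs : IsBounded s) {μ ν : Measure ℝ}
    (hμ : μ ∈ ProbOn s) (hν : ν ∈ ProbOn s) : |kappa μ - kappa ν| ≤ W1 μ ν := by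
  have := hμ.1
  have := hν.1
  rw [kappa_eq_integral_kappaWeight, kappa_eq_integral_kappaWeight, abs_sub_le_iff]
  have hneg := integral_sub_integral_le_W1 hs hμ hν lipschitzWith_kappaWeight.neg
  simp only [Pi.neg_apply, integral_neg] at hneg
  exact ⟨integral_sub_integral_le_W1 hs hμ hν lipschitzWith_kappaWeight, by linarith⟩

lemma fCounter_mem_probOn {r : ℝ} (hr : 11 / 10 ≤ r) {μ : Measure ℝ}
    (hμ : μ ∈ ProbOn (Icc (-r) r)) : fCounter μ ∈ ProbOn (Icc (-r) r) := by
  have := hμ.1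
  refine ⟨Measure.isProbabilityMeasure_map (continuous_Rmap _).aemeasurable, ?_⟩
  rw [fCounter, Measure.map_apply (continuous_Rmap _).measurable measurableSet_Icc.compl]
  exact measure_mono_null (fun x hx hmem ↦ hx (Rmap_mapsTo_Icc _ hr hmem)) hμ.2

lemma supportPreservingProb_fCounter {r : ℝ} (hr : 11 / 10 ≤ r) :
    SupportPreservingProb (Icc (-r) r) fCounter := by
  intro n _ x hx
  set μ := ∑ i, ((n : ℝ≥0∞))⁻¹ • Measure.dirac (x i)
  refine ⟨fun i ↦ Rmap (amu μ) (x i), fun i ↦ Rmap_mapsTo_Icc _ hr (hx i), ?_,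
    fun i j h ↦ congrArg (Rmap (amu μ)) h⟩
  rw [fCounter, Measure.map_finset_sum' (continuous_Rmap _).aemeasurable]
  simp only [Measure.map_smul, Measure.map_dirac' (continuous_Rmap _).measurable]

lemma W1_fCounter_le {s : Set ℝ} (hs : IsBounded s) {μ ν : Measure ℝ} (hμ : μ ∈ ProbOn s)
    (hν : ν ∈ ProbOn s) :
    W1 (fCounter μ) (fCounter ν) ≤ (2 + |amu μ|) * W1 μ ν
      + min (1 / 5) (|amu μ - amu ν| / 10) * (ν (Icc (-1) 1)).toReal := by
  have := hν.1
  have hdist : ∫ x, dist (Rmap (amu μ) x) (Rmap (amu ν) x) ∂ν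
      ≤ min (1 / 5) (|amu μ - amu ν| / 10) * (ν (Icc (-1) 1)).toReal := by
    calc ∫ x, dist (Rmap (amu μ) x) (Rmap (amu ν) x) ∂ν
        ≤ ∫ x, (Icc (-1) 1).indicator (fun _ ↦ min (1 / 5) (|amu μ - amu ν| / 10)) x ∂ν :=
          integral_mono_of_nonneg (ae_of_all _ fun _ ↦ dist_nonneg)
            ((integrable_const _).indicator measurableSet_Icc)
            (ae_of_all _ fun x ↦ abs_Rmap_sub_Rmap_le _ _ x)
      _ = _ := by rw [integral_indicator_const _ measurableSet_Icc, smul_eq_mul, mul_comm,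
          measureReal_def]
  have := W1_map_map_le hs hμ hν (lipschitzWith_Rmap (amu μ)) (lipschitzWith_Rmap (amu ν))
  rw [NNReal.coe_add, coe_nnnorm, Real.norm_eq_abs] at this
  push_cast at this
  rw [fCounter, fCounter]
  linarith

lemma exists_W1_fCounter_le_mul {s : Set ℝ} (hs : IsBounded s) {μ : Measure ℝ}
    (hμ : μ ∈ ProbOn s) : ∃ C, 0 ≤ C ∧ ∃ δ > 0, ∀ ν ∈ ProbOn s,
      W1 μ ν < δ → W1 (fCounter μ) (fCounter ν) ≤ C * W1 μ ν := by
  by_cases hκ : 0 < kappa μ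
  · refine ⟨2 + |amu μ| + (10 * kappa μ)⁻¹, by positivity, kappa μ / 2, by positivity,
      fun ν hν hW ↦ ?_⟩
    have := hν.1
    have hκν := abs_le.mp (abs_kappa_sub_kappa_le_W1 hs hμ hν)
    have hκν_pos : 0 < kappa ν := by linarith
    have hamu : |amu μ - amu ν| = |kappa μ - kappa ν| / (kappa μ * kappa ν) := by
      rw [amu, amu, if_pos hκ, if_pos hκν_pos, inv_sub_inv hκ.ne' hκν_pos.ne', abs_div,
        abs_of_pos (mul_pos hκ hκν_pos), abs_sub_comm]
    calc W1 (fCounter μ) (fCounter ν) ≤ (2 + |amu μ|) * W1 μ ν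
          + min (1 / 5) (|amu μ - amu ν| / 10) * (ν (Icc (-1) 1)).toReal :=
          W1_fCounter_le hs hμ hν
      _ ≤ (2 + |amu μ|) * W1 μ ν + |amu μ - amu ν| / 10 * kappa ν := by
          gcongr
          · exact min_le_right _ _
          · exact measure_Icc_le_kappa ν
      _ = (2 + |amu μ|) * W1 μ ν + |kappa μ - kappa ν| / (10 * kappa μ) := by
          rw [hamu]; field_simp
      _ ≤ (2 + |amu μ|) * W1 μ ν + W1 μ ν / (10 * kappa μ) := by
          gcongr; exact abs_kappa_sub_kappa_le_W1 hs hμ hν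
      _ = _ := by ring
  · refine ⟨2 + 1 / 5, by norm_num, 1, one_pos, fun ν hν _ ↦ ?_⟩
    have := hν.1
    have hκν := abs_le.mp (abs_kappa_sub_kappa_le_W1 hs hμ hν)
    calc W1 (fCounter μ) (fCounter ν) ≤ (2 + |amu μ|) * W1 μ ν
          + min (1 / 5) (|amu μ - amu ν| / 10) * (ν (Icc (-1) 1)).toReal :=
          W1_fCounter_le hs hμ hν
      _ ≤ 2 * W1 μ ν + 1 / 5 * kappa ν := by
          rw [amu, if_neg hκ, abs_zero, add_zero]
          gcongr
          · exact min_le_left _ _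
          · exact measure_Icc_le_kappa ν
      _ ≤ (2 + 1 / 5) * W1 μ ν := by linarith

/-- The map `f(μ) = (R_{a(μ)})_♯ μ` maps `P([-3,3])` into `P([-3,3])`, is
support-preserving, and is continuous in the 1-Wasserstein topology. -/
theorem fCounter_supportPreserving_continuous :
    (∀ μ ∈ ProbOn (Set.Icc (-3 : ℝ) 3), fCounter μ ∈ ProbOn (Set.Icc (-3 : ℝ) 3)) ∧
    SupportPreservingProb (Set.Icc (-3 : ℝ) 3) fCounter ∧
    (∀ μ ∈ ProbOn (Set.Icc (-3 : ℝ) 3), ∀ ε > (0 : ℝ), ∃ δ > (0 : ℝ),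
      ∀ ν ∈ ProbOn (Set.Icc (-3 : ℝ) 3),
        W1 μ ν < δ → W1 (fCounter μ) (fCounter ν) < ε) := by
  refine ⟨fun μ hμ ↦ fCounter_mem_probOn (by norm_num) hμ,
    supportPreservingProb_fCounter (by norm_num), fun μ hμ ε hε ↦ ?_⟩
  obtain ⟨C, hC, δ, hδ, hfC⟩ := exists_W1_fCounter_le_mul (isBounded_Icc _ _) hμ
  refine ⟨min δ (ε / (C + 1)), by positivity, fun ν hν hμν ↦ ?_⟩
  calc W1 (fCounter μ) (fCounter ν) ≤ C * W1 μ ν := hfC ν hν (hμν.trans_le (min_le_left _ _))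
    _ ≤ C * (ε / (C + 1)) := by gcongr; exact hμν.le.trans (min_le_right _ _)
    _ < ε := by rw [← mul_div_assoc, div_lt_iff₀ (by positivity)]; nlinarith
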